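/- arXiv:0807.2714 — 2 statements merged into one kernel-verified Lean document; each statement's English description precedes it below -/
import Mathlib

section
/- Fix integers n ≥ 2, k, r with n ≥ k+1 ≥ 2 and r−1 ≥ 1. Suppose λ ∈ ℤ^n is (k+1, r−1)-admissible and, for some 0 ≤ i ≤ n, the element s_i·λ is not (k+1, r−1)-admissible. Then 1 ≤ i ≤ n−1; the element s_i·λ has exactly one (k+1, r−1)-neighborhood, namely the pair (i, i+1) or the pair (i+1, i); and (s_i·λ)_i − (s_i·λ)_{i+1} = −(r−1) and ρ(s_i·λ)_i − ρ(s_i·λ)_{i+1} = −k. -/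
open scoped Classical

namespace CCnDAHA

variable {n : ℕ}




/-- σ(λ)_i = +1 if λ_i ≥ 0, −1 otherwise. -/
def sgn (lam : Fin n → ℤ) (i : Fin n) : ℤ := if 0 ≤ lam i then 1 else -1

/-- `Prec lam i j` : index `i` strictly precedes `j` in the ordering i_1,…,i_n. -/
def Prec (lam : Fin n → ℤ) (i j : Fin n) : Prop :=
  |lam j| < |lam i| ∨
    (|lam i| = |lam j| ∧
      ((0 ≤ lam i ∧ lam j < 0) ∨
       (0 ≤ lam i ∧ 0 ≤ lam j ∧ i < j) ∨
       (lam i < 0 ∧ lam j < 0 ∧ j < i)))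

/-- 0-based position of index `i` in the ordering i_1,…,i_n (position m−1). -/
noncomputable def posOf (lam : Fin n → ℤ) (i : Fin n) : ℕ :=
  (Finset.univ.filter (fun j => Prec lam j i)).card

/-- ρ(λ)_i = σ(λ)_i · (n − m) where i = i_m. -/
noncomputable def rho (lam : Fin n → ℤ) (i : Fin n) : ℤ :=
  sgn lam i * ((n : ℤ) - 1 - (posOf lam i : ℤ))

/-- (a,b)-neighborhood. -/
noncomputable def IsNbhd (a b : ℤ) (lam : Fin n → ℤ) (i j : Fin n) : Prop :=
  |rho lam i| - |rho lam j| = a - 1 ∧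
  |lam i| - |lam j| ≤ b ∧
  (|lam i| - |lam j| = b →
    ((0 ≤ lam i ∧ 0 ≤ lam j ∧ j < i) ∨
     (lam i < 0 ∧ lam j < 0 ∧ i < j) ∨
     (lam i < 0 ∧ 0 ≤ lam j)))

/-- (a,b)-admissible: no (a,b)-neighborhood. -/
noncomputable def Admissible (a b : ℤ) (lam : Fin n → ℤ) : Prop :=
  ∀ i j, ¬ IsNbhd a b lam i j

/-- number of (a,b)-neighborhoods. -/
noncomputable def nbhdCount (a b : ℤ) (lam : Fin n → ℤ) : ℕ :=
  ((Finset.univ : Finset (Fin n × Fin n)).filter (fun p => IsNbhd a b lam p.1 p.2)).card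

/-- dot action of the affine simple reflection s_i (0 ≤ i ≤ n, 1-based paper indexing). -/
noncomputable def dotAct (i : ℕ) (lam : Fin n → ℤ) : Fin n → ℤ := fun j =>
  if i = 0 then (if (j : ℕ) = 0 then -1 - lam j else lam j)
  else if i = n then (if (j : ℕ) + 1 = n then -lam j else lam j)
  else if h1 : (j : ℕ) + 1 = i ∧ i < n then lam ⟨(j : ℕ) + 1, by omega⟩
  else if h2 : (j : ℕ) = i then lam ⟨(j : ℕ) - 1, by have := j.isLt; omega⟩
  else lam j

/-- pairing ⟨λ, α_i⟩, for 0 ≤ i ≤ n. -/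
noncomputable def pairing (i : ℕ) (lam : Fin n → ℤ) : ℤ :=
  if hn : n = 0 then 0
  else if i = 0 then -2 * lam ⟨0, by omega⟩
  else if i = n then 2 * lam ⟨n - 1, by omega⟩
  else lam ⟨(i - 1) % n, Nat.mod_lt _ (by omega)⟩ - lam ⟨i % n, Nat.mod_lt _ (by omega)⟩

/-- partial sum λ_1 + ⋯ + λ_j. -/
def psum (lam : Fin n → ℤ) (j : Fin n) : ℤ :=
  ∑ i ∈ Finset.univ.filter (fun i => i ≤ j), lam i

/-- dominance order: μ ≤ λ. -/
def DomLE (mu lam : Fin n → ℤ) : Prop := ∀ j, psum mu j ≤ psum lam j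

/-- λ⁺ : the weakly decreasing rearrangement of (|λ_1|,…,|λ_n|). -/
noncomputable def lamPlus (lam : Fin n → ℤ) : Fin n → ℤ := fun j =>
  ((Multiset.sort (Multiset.map (fun i => |lam i|) Finset.univ.val) (· ≤ ·)).reverse).getD (j : ℕ) 0

/-- λ ≻ μ. -/
noncomputable def SuccOrd (lam mu : Fin n → ℤ) : Prop :=
  (DomLE (lamPlus mu) (lamPlus lam) ∧ lamPlus lam ≠ lamPlus mu) ∨
  (lamPlus lam = lamPlus mu ∧ DomLE mu lam ∧ lam ≠ mu)

/-- |λ_{i_m}|, with the sentinel value 0 at m = n+1. -/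
noncomputable def absAt (lam : Fin n → ℤ) (m : ℕ) : ℤ :=
  if m = n + 1 then 0
  else ∑ i ∈ Finset.univ.filter (fun i => posOf lam i + 1 = m), |lam i|

/-- σ(λ)_{i_m}, with sentinel value +1 at m = n+1. -/
noncomputable def sgAt (lam : Fin n → ℤ) (m : ℕ) : ℤ :=
  if m = n + 1 then 1
  else ∑ i ∈ Finset.univ.filter (fun i => posOf lam i + 1 = m), sgn lam i

/-- the (1-based) value of the index i_m, with sentinel value n+1 at m = n+1. -/
noncomputable def ixAt (lam : Fin n → ℤ) (m : ℕ) : ℕ :=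
  if m = n + 1 then n + 1
  else ∑ i ∈ Finset.univ.filter (fun i => posOf lam i + 1 = m), ((i : ℕ) + 1)

/-- β_m ∈ {0,1}. -/
noncomputable def betaAt (lam : Fin n → ℤ) (m : ℕ) : ℤ :=
  if (sgAt lam m = 1 ∧ sgAt lam (m + 1) = 1 ∧ ixAt lam (m + 1) < ixAt lam m) ∨
     (sgAt lam m = -1 ∧ sgAt lam (m + 1) = -1 ∧ ixAt lam m < ixAt lam (m + 1)) ∨
     (sgAt lam m = -1 ∧ sgAt lam (m + 1) = 1)
  then 1 else 0

/-- p_m = ⌊(|λ_{i_m}| − |λ_{i_{m+1}}| − β_m)/b⌋ (b plays the role of r−1). -/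
noncomputable def pAt (b : ℤ) (lam : Fin n → ℤ) (m : ℕ) : ℤ :=
  Int.fdiv (absAt lam m - absAt lam (m + 1) - betaAt lam m) b

/-- the b-quotient λ^{quot} (b plays the role of r−1): j-th entry is p_j + ⋯ + p_n
(1-based j = (j:Fin n) + 1). -/
noncomputable def quotOf (b : ℤ) (lam : Fin n → ℤ) : Fin n → ℤ := fun j =>
  ∑ m ∈ Finset.Icc ((j : ℕ) + 1) n, pAt b lam m

/-- fundamental weight ϖ_j (1-based j = (j : Fin n)+1): first j entries 1, rest 0. -/
def varpi (j : Fin n) : Fin n → ℤ := fun i => if i ≤ j then 1 else 0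



/-!
The reflections `s_0` and `s_n` change a single entry in a way that keeps the ordering of the
indices, hence `|ρ|`, and only makes conditions (ii)–(iii) harder to meet; so they preserve
admissibility. For `1 ≤ i ≤ n - 1`, `s_i` swaps two adjacent entries; when these differ, the
ordering, `ρ` and the neighborhood relation are transported by the swap on every pair of indices
except `{i, i+1}`. A neighborhood of `s_i·λ` at this pair, set against the reversed pair not being
a neighborhood of `λ`, forces the boundary case of (iii) with `λ_i`, `λ_{i+1}` of equal sign, which
yields both identities; the reversed pair of `s_i·λ` has the opposite `|ρ|`-difference, so the
neighborhood is unique.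
-/

section Order

variable {lam mu : Fin n → ℤ}

lemma prec_irrefl (lam : Fin n → ℤ) (x : Fin n) : ¬ Prec lam x x := by
  unfold Prec; grind

lemma prec_iff_not_prec {x y : Fin n} (h : x ≠ y) : Prec lam x y ↔ ¬ Prec lam y x := by
  unfold Prec; grind

lemma posOf_lt (lam : Fin n → ℤ) (x : Fin n) : posOf lam x < n := by
  have hsub : Finset.univ.filter (fun j => Prec lam j x) ⊆ Finset.univ.erase x := fun j hj =>
    Finset.mem_erase.2 ⟨fun h => prec_irrefl lam x (h ▸ (Finset.mem_filter.1 hj).2),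
      Finset.mem_univ j⟩
  calc posOf lam x ≤ (Finset.univ.erase x).card := Finset.card_le_card hsub
    _ < n := by simp [x.pos]

lemma abs_rho (lam : Fin n → ℤ) (x : Fin n) :
    |rho lam x| = (n : ℤ) - 1 - (posOf lam x : ℤ) := by
  have := posOf_lt lam x
  unfold rho sgn
  split_ifs <;> simp only [one_mul, neg_one_mul, abs_neg] <;> exact abs_of_nonneg (by omega)

lemma rho_of_nonneg {x : Fin n} (h : 0 ≤ lam x) : rho lam x = |rho lam x| := by
  rw [abs_rho, rho, sgn, if_pos h, one_mul]

lemma rho_of_neg {x : Fin n} (h : lam x < 0) : rho lam x = -|rho lam x| := by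
  rw [abs_rho, rho, sgn, if_neg h.not_ge, neg_one_mul]

lemma posOf_eq_of_prec_iff (e : Equiv.Perm (Fin n))
    (h : ∀ x y, Prec mu x y ↔ Prec lam (e x) (e y)) (x : Fin n) :
    posOf mu x = posOf lam (e x) := by
  simp only [posOf, ← Fintype.card_subtype]
  exact Fintype.card_congr (e.subtypeEquiv fun j => h j x)

lemma prec_update_iff {z : Fin n} {v : ℤ}
    (hz : ∀ j, j ≠ z → (Prec (Function.update lam z v) z j ↔ Prec lam z j)) (x y : Fin n) :
    Prec (Function.update lam z v) x y ↔ Prec lam x y := by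
  rcases eq_or_ne x y with rfl | hxy
  · exact iff_of_false (prec_irrefl _ _) (prec_irrefl _ _)
  rcases eq_or_ne x z with rfl | hx
  · exact hz y hxy.symm
  rcases eq_or_ne y z with rfl | hy
  · rw [prec_iff_not_prec hxy, prec_iff_not_prec hxy, hz x hx]
  · simp only [Prec, Function.update_of_ne hx, Function.update_of_ne hy]

end Order

/-- Conditions (ii) and (iii) in the definition of an `(a, b)`-neighborhood. -/
def GapLE (b : ℤ) (lam : Fin n → ℤ) (i j : Fin n) : Prop :=
  |lam i| - |lam j| ≤ b ∧
  (|lam i| - |lam j| = b →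
    ((0 ≤ lam i ∧ 0 ≤ lam j ∧ j < i) ∨
     (lam i < 0 ∧ lam j < 0 ∧ i < j) ∨
     (lam i < 0 ∧ 0 ≤ lam j)))

section Neighborhoods

variable {a b : ℤ} {lam : Fin n → ℤ}

lemma isNbhd_iff {i j : Fin n} :
    IsNbhd a b lam i j ↔ |rho lam i| - |rho lam j| = a - 1 ∧ GapLE b lam i j :=
  Iff.rfl

lemma nbhdCount_eq_one {u v : Fin n} (h : IsNbhd a b lam u v)
    (huniq : ∀ x y, IsNbhd a b lam x y → x = u ∧ y = v) : nbhdCount a b lam = 1 := by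
  refine Finset.card_eq_one.2 ⟨(u, v), Finset.eq_singleton_iff_unique_mem.2 ⟨?_, ?_⟩⟩
  · simpa using h
  · rintro ⟨x, y⟩ hxy
    simpa using huniq x y (Finset.mem_filter.1 hxy).2

lemma isNbhd_of_isNbhd_update (ha : a ≠ 1) {z : Fin n} {v : ℤ}
    (hprec : ∀ j, j ≠ z → (Prec (Function.update lam z v) z j ↔ Prec lam z j))
    (hgap₁ : ∀ j, j ≠ z → GapLE b (Function.update lam z v) z j → GapLE b lam z j)
    (hgap₂ : ∀ j, j ≠ z → GapLE b (Function.update lam z v) j z → GapLE b lam j z)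
    {x y : Fin n} (h : IsNbhd a b (Function.update lam z v) x y) : IsNbhd a b lam x y := by
  have hpos (w : Fin n) : posOf (Function.update lam z v) w = posOf lam w := by
    simp only [posOf, prec_update_iff hprec]
  rw [isNbhd_iff, abs_rho, abs_rho, hpos, hpos, ← abs_rho, ← abs_rho] at h
  obtain ⟨hrho, hgap⟩ := h
  have hxy : x ≠ y := by rintro rfl; omega
  refine ⟨hrho, ?_⟩
  rcases eq_or_ne x z with rfl | hx
  · exact hgap₁ y hxy.symm hgap
  rcases eq_or_ne y z with rfl | hy
  · exact hgap₂ x hx hgap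
  · simpa only [GapLE, Function.update_of_ne hx, Function.update_of_ne hy] using hgap

end Neighborhoods

section Reflections

variable {a b : ℤ} {lam : Fin n → ℤ}

lemma dotAct_zero {z : Fin n} (hz : (z : ℕ) = 0) :
    dotAct 0 lam = Function.update lam z (-1 - lam z) := by
  funext j
  rcases eq_or_ne j z with rfl | hj
  · simp [dotAct, hz]
  · simp [dotAct, Function.update_of_ne hj, show (j : ℕ) ≠ 0 by omega]

lemma dotAct_last {z : Fin n} (hz : (z : ℕ) + 1 = n) :
    dotAct n lam = Function.update lam z (-lam z) := by
  funext j
  rcases eq_or_ne j z with rfl | hj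
  · simp [dotAct, hz, show n ≠ 0 by omega]
  · simp [dotAct, Function.update_of_ne hj, show (j : ℕ) + 1 ≠ n by omega, show n ≠ 0 by omega]

lemma dotAct_of_lt {i : ℕ} (hi : n < i) : dotAct i lam = lam := by
  funext j
  simp [dotAct, show i ≠ 0 by omega, hi.ne', show (j : ℕ) ≠ i by omega, hi.not_gt]

lemma dotAct_eq_comp_swap {i : ℕ} (h0 : i ≠ 0) (hi : i < n) :
    dotAct i lam = lam ∘ Equiv.swap ⟨i - 1, by omega⟩ ⟨i, hi⟩ := by
  funext j
  simp only [dotAct, if_neg h0, if_neg hi.ne, Function.comp_apply, Equiv.swap_apply_def]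
  split_ifs <;> simp only [Fin.ext_iff] at * <;>
    first | rfl | omega | (congr 1; ext; simp only; omega)

lemma admissible_dotAct_zero (ha : a ≠ 1) (hadm : Admissible a b lam) :
    Admissible a b (dotAct 0 lam) := by
  intro x y hxy
  obtain ⟨m, rfl⟩ := Nat.exists_eq_add_one.2 x.pos
  rw [dotAct_zero (z := 0) rfl] at hxy
  refine hadm x y (isNbhd_of_isNbhd_update ha (fun j hj => ?_) (fun j hj => ?_)
    (fun j hj => ?_) hxy) <;>
  · have := Fin.pos_iff_ne_zero.2 hj
    simp only [Prec, GapLE, Function.update_self, Function.update_of_ne hj]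
    grind

lemma admissible_dotAct_last (ha : a ≠ 1) (hadm : Admissible a b lam) :
    Admissible a b (dotAct n lam) := by
  intro x y hxy
  obtain ⟨m, rfl⟩ := Nat.exists_eq_add_one.2 x.pos
  rw [dotAct_last (z := Fin.last m) rfl] at hxy
  refine hadm x y (isNbhd_of_isNbhd_update ha (fun j hj => ?_) (fun j hj => ?_)
    (fun j hj => ?_) hxy) <;>
  · have := Fin.lt_last_iff_ne_last.2 hj
    simp only [Prec, GapLE, Function.update_self, Function.update_of_ne hj]
    grind

end Reflections

section Swap

variable {a b : ℤ} {lam : Fin n → ℤ} {p q : Fin n}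

lemma lt_iff_swap_lt (hpq : (p : ℕ) + 1 = q) {x y : Fin n}
    (h₁ : ¬(x = p ∧ y = q)) (h₂ : ¬(x = q ∧ y = p)) :
    x < y ↔ Equiv.swap p q x < Equiv.swap p q y := by
  simp only [Equiv.swap_apply_def, Fin.lt_def, Fin.ext_iff] at *
  split_ifs <;> omega

lemma prec_comp_swap (hpq : (p : ℕ) + 1 = q) (hne : lam p ≠ lam q) (x y : Fin n) :
    Prec (lam ∘ Equiv.swap p q) x y ↔ Prec lam (Equiv.swap p q x) (Equiv.swap p q y) := by
  have hlt : p < q := Fin.lt_def.2 (by omega)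
  by_cases h : (x = p ∧ y = q) ∨ (x = q ∧ y = p)
  · rcases h with ⟨rfl, rfl⟩ | ⟨rfl, rfl⟩ <;>
    · simp only [Prec, Function.comp_apply, Equiv.swap_apply_left, Equiv.swap_apply_right]
      grind
  · rw [not_or] at h
    simp only [Prec, Function.comp_apply, lt_iff_swap_lt hpq h.1 h.2,
      lt_iff_swap_lt hpq (fun h' => h.2 ⟨h'.2, h'.1⟩) (fun h' => h.1 ⟨h'.2, h'.1⟩)]

lemma rho_comp_swap (hpq : (p : ℕ) + 1 = q) (hne : lam p ≠ lam q) (x : Fin n) :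
    rho (lam ∘ Equiv.swap p q) x = rho lam (Equiv.swap p q x) := by
  rw [rho, posOf_eq_of_prec_iff _ (prec_comp_swap hpq hne) x]
  rfl

lemma isNbhd_comp_swap_iff (hpq : (p : ℕ) + 1 = q) (hne : lam p ≠ lam q) {x y : Fin n}
    (h₁ : ¬(x = p ∧ y = q)) (h₂ : ¬(x = q ∧ y = p)) :
    IsNbhd a b (lam ∘ Equiv.swap p q) x y ↔
      IsNbhd a b lam (Equiv.swap p q x) (Equiv.swap p q y) := by
  simp only [isNbhd_iff, GapLE, rho_comp_swap hpq hne, Function.comp_apply,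
    lt_iff_swap_lt hpq h₁ h₂,
    lt_iff_swap_lt hpq (fun h => h₂ ⟨h.2, h.1⟩) (fun h => h₁ ⟨h.2, h.1⟩)]

lemma eq_pair_of_isNbhd_comp_swap (hpq : (p : ℕ) + 1 = q) (hne : lam p ≠ lam q)
    (hadm : Admissible a b lam) {x y : Fin n} (h : IsNbhd a b (lam ∘ Equiv.swap p q) x y) :
    (x = p ∧ y = q) ∨ (x = q ∧ y = p) := by
  by_contra hxy
  rw [not_or] at hxy
  exact hadm _ _ ((isNbhd_comp_swap_iff hpq hne hxy.1 hxy.2).1 h)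

lemma neg_of_isNbhd_comp_swap (hpq : (p : ℕ) + 1 = q) (hne : lam p ≠ lam q)
    (hadm : Admissible a b lam) (h : IsNbhd a b (lam ∘ Equiv.swap p q) p q) :
    lam p < 0 ∧ lam q < 0 ∧ |lam q| - |lam p| = b ∧ |rho lam q| - |rho lam p| = a - 1 := by
  have hlt : p < q := Fin.lt_def.2 (by omega)
  have hnot := hadm q p
  simp only [isNbhd_iff, GapLE, rho_comp_swap hpq hne, Function.comp_apply,
    Equiv.swap_apply_left, Equiv.swap_apply_right] at h hnot
  grind

lemma nonneg_of_isNbhd_comp_swap (hpq : (p : ℕ) + 1 = q) (hne : lam p ≠ lam q)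
    (hadm : Admissible a b lam) (h : IsNbhd a b (lam ∘ Equiv.swap p q) q p) :
    0 ≤ lam p ∧ 0 ≤ lam q ∧ |lam p| - |lam q| = b ∧ |rho lam p| - |rho lam q| = a - 1 := by
  have hlt : p < q := Fin.lt_def.2 (by omega)
  have hnot := hadm p q
  simp only [isNbhd_iff, GapLE, rho_comp_swap hpq hne, Function.comp_apply,
    Equiv.swap_apply_left, Equiv.swap_apply_right] at h hnot
  grind

theorem unique_isNbhd_comp_swap (ha : a ≠ 1) (hpq : (p : ℕ) + 1 = q)
    (hadm : Admissible a b lam) (hnadm : ¬ Admissible a b (lam ∘ Equiv.swap p q)) :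
    nbhdCount a b (lam ∘ Equiv.swap p q) = 1 ∧
      (IsNbhd a b (lam ∘ Equiv.swap p q) p q ∨ IsNbhd a b (lam ∘ Equiv.swap p q) q p) ∧
      (lam ∘ Equiv.swap p q) p - (lam ∘ Equiv.swap p q) q = -b ∧
      rho (lam ∘ Equiv.swap p q) p - rho (lam ∘ Equiv.swap p q) q = -(a - 1) := by
  obtain ⟨x, y, hxy⟩ : ∃ x y, IsNbhd a b (lam ∘ Equiv.swap p q) x y := by
    simpa [Admissible] using hnadm
  have hne : lam p ≠ lam q := by
    intro h
    rw [Equiv.comp_swap_eq_update, h, Function.update_eq_self, ← h,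
      Function.update_eq_self] at hxy
    exact hadm x y hxy
  have hrho (u : Fin n) := rho_comp_swap hpq hne u
  simp only [Function.comp_apply, Equiv.swap_apply_left, Equiv.swap_apply_right, hrho]
  rcases eq_pair_of_isNbhd_comp_swap hpq hne hadm hxy with ⟨rfl, rfl⟩ | ⟨rfl, rfl⟩
  · obtain ⟨hp, hq, hgap, hrho'⟩ := neg_of_isNbhd_comp_swap hpq hne hadm hxy
    refine ⟨nbhdCount_eq_one hxy fun u v huv => ?_, Or.inl hxy, ?_, ?_⟩
    · rcases eq_pair_of_isNbhd_comp_swap hpq hne hadm huv with h | ⟨rfl, rfl⟩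
      · exact h
      · have := (isNbhd_iff.1 huv).1
        simp only [hrho, Equiv.swap_apply_left, Equiv.swap_apply_right] at this
        omega
    · rw [abs_of_neg hp, abs_of_neg hq] at hgap
      omega
    · rw [rho_of_neg hp, rho_of_neg hq]
      omega
  · obtain ⟨hp, hq, hgap, hrho'⟩ := nonneg_of_isNbhd_comp_swap hpq hne hadm hxy
    refine ⟨nbhdCount_eq_one hxy fun u v huv => ?_, Or.inr hxy, ?_, ?_⟩
    · rcases eq_pair_of_isNbhd_comp_swap hpq hne hadm huv with ⟨rfl, rfl⟩ | h
      · have := (isNbhd_iff.1 huv).1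
        simp only [hrho, Equiv.swap_apply_left, Equiv.swap_apply_right] at this
        omega
      · exact h
    · rw [abs_of_nonneg hp, abs_of_nonneg hq] at hgap
      omega
    · rw [rho_of_nonneg hp, rho_of_nonneg hq]
      omega

end Swap

theorem stmt4_general (n : ℕ) (k r : ℤ)
    (hk2 : 2 ≤ k + 1)
    (lam : Fin n → ℤ) (i : ℕ)
    (hadm : Admissible (k + 1) (r - 1) lam)
    (hnadm : ¬ Admissible (k + 1) (r - 1) (dotAct i lam)) :
    1 ≤ i ∧ i ≤ n - 1 ∧
    ∃ j j2 : Fin n, (j : ℕ) = i - 1 ∧ (j2 : ℕ) = i ∧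
      nbhdCount (k + 1) (r - 1) (dotAct i lam) = 1 ∧
      (IsNbhd (k + 1) (r - 1) (dotAct i lam) j j2 ∨
        IsNbhd (k + 1) (r - 1) (dotAct i lam) j2 j) ∧
      dotAct i lam j - dotAct i lam j2 = -(r - 1) ∧
      rho (dotAct i lam) j - rho (dotAct i lam) j2 = -k := by
  have ha : k + 1 ≠ 1 := by omega
  have hi0 : i ≠ 0 := by
    rintro rfl
    exact hnadm (admissible_dotAct_zero ha hadm)
  have hin : i < n := by
    rcases lt_trichotomy i n with h | rfl | h
    · exact h
    · exact (hnadm (admissible_dotAct_last ha hadm)).elim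
    · exact (hnadm (dotAct_of_lt h ▸ hadm)).elim
  refine ⟨by omega, by omega, ⟨i - 1, by omega⟩, ⟨i, hin⟩, rfl, rfl, ?_⟩
  rw [dotAct_eq_comp_swap hi0 hin] at hnadm ⊢
  obtain ⟨hcount, hnbhd, hval, hrho⟩ :=
    unique_isNbhd_comp_swap ha (by simp; omega) hadm hnadm
  exact ⟨hcount, hnbhd, hval, by rw [hrho]; ring⟩

/-- if λ is (k+1,r−1)-admissible but s_i·λ is not, then 1 ≤ i ≤ n−1, s_i·λ has
exactly one neighborhood, which is the pair (i,i+1) or (i+1,i), and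
(s_i·λ)_i − (s_i·λ)_{i+1} = −(r−1), ρ(s_i·λ)_i − ρ(s_i·λ)_{i+1} = −k. -/
theorem stmt4 (n : ℕ) (hn : 2 ≤ n) (k r : ℤ)
    (hk2 : 2 ≤ k + 1) (hkn : k + 1 ≤ (n : ℤ)) (hr : 1 ≤ r - 1)
    (lam : Fin n → ℤ) (i : ℕ) (hi : i ≤ n)
    (hadm : Admissible (k + 1) (r - 1) lam)
    (hnadm : ¬ Admissible (k + 1) (r - 1) (dotAct i lam)) :
    1 ≤ i ∧ i ≤ n - 1 ∧
    ∃ j j2 : Fin n, (j : ℕ) = i - 1 ∧ (j2 : ℕ) = i ∧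
      nbhdCount (k + 1) (r - 1) (dotAct i lam) = 1 ∧
      (IsNbhd (k + 1) (r - 1) (dotAct i lam) j j2 ∨
        IsNbhd (k + 1) (r - 1) (dotAct i lam) j2 j) ∧
      dotAct i lam j - dotAct i lam j2 = -(r - 1) ∧
      rho (dotAct i lam) j - rho (dotAct i lam) j2 = -k :=
  stmt4_general n k r hk2 lam i hadm hnadm

end CCnDAHA
end

section
/- Let k ≥ 1 and m ≥ 1 be integers, n = k·m, and let K be a field with q, t ∈ K^× satisfying t^{k+1}·q^{k} = 1. Then the Laurent polynomial ∏_{1 ≤ i < j ≤ n} (x_i x_j^{−1} − t^{−1})(x_j − t^{−1}x_i^{−1}) in K[x_1^{±1},…,x_n^{±1}] satisfies the 1-wheel condition of type (k+1, k). -/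
open scoped Classical

namespace CCnDAHA

variable {n : ℕ}




/-- Laurent polynomial ring in N variables over K. -/
abbrev LaurentMv (K : Type*) [CommRing K] (N : ℕ) : Type _ := AddMonoidAlgebra K (Fin N →₀ ℤ)

/-- evaluation of a Laurent polynomial at a point z. -/
noncomputable def evalAt {K : Type*} [Field K] (z : Fin n → K) (f : LaurentMv K n) : K :=
  Finsupp.sum f.coeff (fun v c => c * ∏ i, z i ^ (v i))

/-- cyclic successor in Fin k1. -/
def finSucc {k1 : ℕ} (m : Fin k1) : Fin k1 :=
  ⟨((m : ℕ) + 1) % k1, Nat.mod_lt _ (by have := m.isLt; omega)⟩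

/-- A wheel of type (k1, r1) in z, with parameters t, q. -/
def IsWheel {K : Type*} [Field K] (k1 r1 : ℕ) (t q : K) (z : Fin n → Kˣ)
    (idx : Fin k1 → Fin n) (sg : Fin k1 → ℤ) (p : Fin k1 → ℕ) : Prop :=
  Function.Injective idx ∧
  (∀ m, sg m = 1 ∨ sg m = -1) ∧
  (∑ m, p m) = r1 ∧
  (∀ m : Fin k1, ((z (idx m) : K) ^ (sg m)) * t * q ^ (p m)
      = (z (idx (finSucc m)) : K) ^ (sg (finSucc m))) ∧
  (∀ m : Fin k1, p m = 0 →
    (sg m = 1 ∧ sg (finSucc m) = 1 ∧ idx m < idx (finSucc m)) ∨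
    (sg m = 1 ∧ sg (finSucc m) = -1) ∨
    (sg m = -1 ∧ sg (finSucc m) = -1 ∧ idx (finSucc m) < idx m))

/-- z admits mw wheels of type (k1,r1) with pairwise disjoint index sets. -/
def HasWheels {K : Type*} [Field K] (k1 r1 : ℕ) (t q : K) (mw : ℕ) (z : Fin n → Kˣ) : Prop :=
  ∃ (idx : Fin mw → Fin k1 → Fin n) (sg : Fin mw → Fin k1 → ℤ) (p : Fin mw → Fin k1 → ℕ),
    (∀ a, IsWheel k1 r1 t q z (idx a) (sg a) (p a)) ∧
    (∀ a b, a ≠ b → ∀ m m', idx a m ≠ idx b m')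

/-- the mw-wheel condition of type (k1, r1). -/
def SatisfiesWheel {K : Type*} [Field K] (k1 r1 : ℕ) (t q : K) (mw : ℕ)
    (f : LaurentMv K n) : Prop :=
  ∀ z : Fin n → Kˣ, HasWheels k1 r1 t q mw z → evalAt (fun i => (z i : K)) f = 0

/-- The six-variable Laurent polynomial ring A (variables Q,T,T_n,T_0,U_n,U_0 = 0,…,5). -/
abbrev A6 : Type := AddMonoidAlgebra ℂ (Fin 6 →₀ ℤ)

/-- image of x ∈ A in the fraction field K_s of A/(s). -/
noncomputable def bar (s : A6) (x : A6) : FractionRing (A6 ⧸ Ideal.span {s}) :=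
  algebraMap (A6 ⧸ Ideal.span {s}) (FractionRing (A6 ⧸ Ideal.span {s}))
    (Ideal.Quotient.mk (Ideal.span {s}) x)

/-- the permutation action s_i f (1 ≤ i ≤ n−1), swapping the variables x_i, x_j. -/
noncomputable def sSwap {K : Type*} [CommRing K] (i j : Fin n) (f : LaurentMv K n) :
    LaurentMv K n :=
  Finsupp.sum f.coeff (fun v c =>
    AddMonoidAlgebra.single (Finsupp.equivMapDomain (Equiv.swap i j) v) c)

/-- the action s_n f : x_i ↦ x_i⁻¹. -/
noncomputable def sNeg {K : Type*} [CommRing K] (i : Fin n) (f : LaurentMv K n) :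
    LaurentMv K n :=
  Finsupp.sum f.coeff (fun v c => AddMonoidAlgebra.single (Finsupp.update v i (-(v i))) c)

/-- the action s_0 f : x_i ↦ q·x_i⁻¹. -/
noncomputable def sNegQ {K : Type*} [Field K] (q : K) (i : Fin n) (f : LaurentMv K n) :
    LaurentMv K n :=
  Finsupp.sum f.coeff (fun v c =>
    AddMonoidAlgebra.single (Finsupp.update v i (-(v i))) (c * q ^ (v i)))

/-- defining relation of the Noumi operator T̂_i (1 ≤ i ≤ n−1), for the adjacent pair (i,j):
(1 − x_i x_j^{−1})(g − t^{1/2} f) = t^{−1/2}(1 − t x_i x_j^{−1})(s_i f − f). -/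
def RelMid {K : Type*} [Field K] (th : K) (i j : Fin n) (f g : LaurentMv K n) : Prop :=
  (AddMonoidAlgebra.single 0 1
      - AddMonoidAlgebra.single (Finsupp.single i 1 + Finsupp.single j (-1)) (1 : K))
      * (g - th • f)
    = th⁻¹ • ((AddMonoidAlgebra.single 0 1
      - AddMonoidAlgebra.single (Finsupp.single i 1 + Finsupp.single j (-1)) (th ^ 2))
      * (sSwap i j f - f))

/-- defining relation of T̂_n (i is the last variable):
(1 − x_i²)(g − t_n^{1/2} f) = t_n^{−1/2}(1 − a x_i)(1 − b x_i)(s_n f − f). -/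
def RelLast {K : Type*} [Field K] (tnh a b : K) (i : Fin n) (f g : LaurentMv K n) : Prop :=
  (AddMonoidAlgebra.single 0 1 - AddMonoidAlgebra.single (Finsupp.single i 2) (1 : K))
      * (g - tnh • f)
    = tnh⁻¹ • (((AddMonoidAlgebra.single 0 1 - AddMonoidAlgebra.single (Finsupp.single i 1) a)
        * (AddMonoidAlgebra.single 0 1 - AddMonoidAlgebra.single (Finsupp.single i 1) b))
      * (sNeg i f - f))

/-- defining relation of T̂_0 (i is the first variable):
(1 − q x_i^{−2})(g − t_0^{1/2} f) = t_0^{−1/2}(1 − c x_i^{−1})(1 − d x_i^{−1})(s_0 f − f). -/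
def RelZero {K : Type*} [Field K] (t0h q c d : K) (i : Fin n) (f g : LaurentMv K n) : Prop :=
  (AddMonoidAlgebra.single 0 1 - AddMonoidAlgebra.single (Finsupp.single i (-2)) q)
      * (g - t0h • f)
    = t0h⁻¹ • (((AddMonoidAlgebra.single 0 1 - AddMonoidAlgebra.single (Finsupp.single i (-1)) c)
        * (AddMonoidAlgebra.single 0 1 - AddMonoidAlgebra.single (Finsupp.single i (-1)) d))
      * (sNegQ q i f - f))



/- The spoke lengths of a wheel of type (k+1, k) sum to k, so some spoke has length 0.
Its relation then reads `t z_a = z_b`, `t z_a z_b = 1` or `t z_b = z_a` (with the index order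
prescribed by the wheel), and each of these kills one factor of the product. -/

section Evaluation

variable {K : Type*} [Field K]

noncomputable def evalHom (z : Fin n → Kˣ) : LaurentMv K n →ₐ[K] K :=
  AddMonoidAlgebra.lift K K (Fin n →₀ ℤ)
    { toFun := fun v => ∏ i, (z i : K) ^ (Multiplicative.toAdd v i)
      map_one' := Finset.prod_eq_one fun i _ => zpow_zero _
      map_mul' := fun a b => by
        rw [← Finset.prod_mul_distrib]
        exact Finset.prod_congr rfl fun i _ => zpow_add₀ (z i).ne_zero _ _ }

lemma evalAt_eq_evalHom (z : Fin n → Kˣ) (f : LaurentMv K n) :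
    evalAt (fun i => (z i : K)) f = evalHom z f := by
  rw [evalHom, AddMonoidAlgebra.lift_apply]
  rfl

lemma evalHom_single (z : Fin n → Kˣ) (v : Fin n →₀ ℤ) (c : K) :
    evalHom z (AddMonoidAlgebra.single v c) = c * ∏ i, (z i : K) ^ (v i) := by
  simp [evalHom, AddMonoidAlgebra.lift_single]

lemma prod_zpow_add (z : Fin n → Kˣ) (u v : Fin n →₀ ℤ) :
    ∏ i, (z i : K) ^ ((u + v) i) = (∏ i, (z i : K) ^ (u i)) * ∏ i, (z i : K) ^ (v i) := by
  rw [← Finset.prod_mul_distrib]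
  exact Finset.prod_congr rfl fun i _ => by rw [Finsupp.add_apply, zpow_add₀ (z i).ne_zero]

lemma prod_zpow_single (z : Fin n → Kˣ) (i : Fin n) (e : ℤ) :
    ∏ j, (z j : K) ^ (Finsupp.single i e j) = (z i : K) ^ e := by
  rw [Finset.prod_eq_single_of_mem i (Finset.mem_univ _) fun j _ hj => by
    rw [Finsupp.single_eq_of_ne hj, zpow_zero], Finsupp.single_eq_same]

end Evaluation

section PairValue

variable {K : Type*} [Field K]

def pairValue (t x y : K) : K := (x * y⁻¹ - t⁻¹) * (y - t⁻¹ * x⁻¹)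

lemma evalHom_pairFactor (z : Fin n → Kˣ) (t : K) (a b : Fin n) :
    evalHom z ((AddMonoidAlgebra.single (Finsupp.single a 1 + Finsupp.single b (-1)) (1 : K)
        - AddMonoidAlgebra.single 0 t⁻¹)
      * (AddMonoidAlgebra.single (Finsupp.single b 1) 1
        - AddMonoidAlgebra.single (Finsupp.single a (-1)) t⁻¹))
      = pairValue t (z a : K) (z b) := by
  simp only [map_mul, map_sub, evalHom_single, prod_zpow_add, prod_zpow_single, pairValue]
  simp

lemma pairValue_eq_zero_of_mul_eq {t x y : K} (hx : x ≠ 0) (h : x * t = y) :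
    pairValue t x y = 0 := by
  rw [pairValue, ← h, mul_inv, ← mul_assoc, mul_inv_cancel₀ hx, one_mul, sub_self, zero_mul]

lemma pairValue_eq_zero_of_mul_eq_inv {t x y : K} (h : x * t = y⁻¹) :
    pairValue t x y = 0 := by
  rw [pairValue, ← inv_inv y, ← h, mul_inv, mul_comm x⁻¹, sub_self, mul_zero]

lemma pairValue_swap_eq_zero_of_mul_eq_inv {t x y : K} (ht : t ≠ 0) (h : x * t = y⁻¹) :
    pairValue t y x = 0 := by
  rw [pairValue, ← h, mul_comm x t, ← mul_assoc, inv_mul_cancel₀ ht, one_mul, sub_self,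
    mul_zero]

end PairValue

section Wheel

variable {K : Type*} [Field K] {k1 r1 : ℕ} {t q : K} {z : Fin n → Kˣ}
  {idx : Fin k1 → Fin n} {sg : Fin k1 → ℤ} {p : Fin k1 → ℕ}

lemma IsWheel.exists_spoke_eq_zero (hw : IsWheel k1 r1 t q z idx sg p) (hr : r1 < k1) :
    ∃ m, p m = 0 := by
  have hlt : ∑ m, p m < ∑ _m : Fin k1, 1 := by simpa [hw.2.2.1] using hr
  obtain ⟨m, -, hm⟩ := Finset.exists_lt_of_sum_lt hlt
  exact ⟨m, Nat.lt_one_iff.mp hm⟩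

lemma IsWheel.exists_pairValue_eq_zero (hw : IsWheel k1 r1 t q z idx sg p) (ht : t ≠ 0)
    (hr : r1 < k1) : ∃ a b, a < b ∧ pairValue t (z a : K) (z b) = 0 := by
  obtain ⟨m, hm⟩ := hw.exists_spoke_eq_zero hr
  obtain ⟨hinj, -, -, hrel, hzero⟩ := hw
  have hspoke := hrel m
  rw [hm, pow_zero, mul_one] at hspoke
  rcases hzero m hm with ⟨h1, h2, hlt⟩ | ⟨h1, h2⟩ | ⟨h1, h2, hlt⟩
  · rw [h1, h2, zpow_one, zpow_one] at hspoke
    exact ⟨_, _, hlt, pairValue_eq_zero_of_mul_eq (z _).ne_zero hspoke⟩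
  · rw [h1, h2, zpow_one, zpow_neg_one] at hspoke
    have hne : idx m ≠ idx (finSucc m) := fun h => by
      have := congrArg sg (hinj h)
      rw [h1, h2] at this
      norm_num at this
    rcases hne.lt_or_gt with hlt | hlt
    · exact ⟨_, _, hlt, pairValue_eq_zero_of_mul_eq_inv hspoke⟩
    · exact ⟨_, _, hlt, pairValue_swap_eq_zero_of_mul_eq_inv ht hspoke⟩
  · rw [h1, h2, zpow_neg_one, zpow_neg_one] at hspoke
    refine ⟨_, _, hlt, pairValue_eq_zero_of_mul_eq (z _).ne_zero ?_⟩
    rw [← inv_inv (z (idx (finSucc m)) : K), ← hspoke, mul_inv, inv_inv, mul_assoc,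
      inv_mul_cancel₀ ht, mul_one]

end Wheel

theorem stmt7_general {K : Type*} [Field K] (k m : ℕ) (t q : K) (ht : t ≠ 0) :
    SatisfiesWheel (n := k * m) (k + 1) k t q 1
      (∏ p ∈ (Finset.univ : Finset (Fin (k * m) × Fin (k * m))).filter
          (fun p => p.1 < p.2),
        ((AddMonoidAlgebra.single (Finsupp.single p.1 1 + Finsupp.single p.2 (-1)) (1 : K)
            - AddMonoidAlgebra.single 0 t⁻¹)
          * (AddMonoidAlgebra.single (Finsupp.single p.2 1) 1
            - AddMonoidAlgebra.single (Finsupp.single p.1 (-1)) t⁻¹))) := by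
  rintro z ⟨idx, sg, p, hw, -⟩
  obtain ⟨a, b, hab, hzero⟩ := (hw 0).exists_pairValue_eq_zero ht k.lt_succ_self
  rw [evalAt_eq_evalHom, map_prod]
  refine Finset.prod_eq_zero (i := (a, b)) (Finset.mem_filter.2 ⟨Finset.mem_univ _, hab⟩) ?_
  rw [evalHom_pairFactor, hzero]

/-- for t^{k+1}q^k = 1 and n = km, the Laurent polynomial
∏_{1≤i<j≤n} (x_i x_j⁻¹ − t⁻¹)(x_j − t⁻¹ x_i⁻¹)
satisfies the 1-wheel condition of type (k+1,k). -/
theorem stmt7 {K : Type*} [Field K] (k m : ℕ) (hk : 1 ≤ k) (hm : 1 ≤ m)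
    (t q : K) (ht : t ≠ 0) (hq : q ≠ 0) (hspec : t ^ (k + 1) * q ^ k = 1) :
    SatisfiesWheel (n := k * m) (k + 1) k t q 1
      (∏ p ∈ (Finset.univ : Finset (Fin (k * m) × Fin (k * m))).filter
          (fun p => p.1 < p.2),
        ((AddMonoidAlgebra.single (Finsupp.single p.1 1 + Finsupp.single p.2 (-1)) (1 : K)
            - AddMonoidAlgebra.single 0 t⁻¹)
          * (AddMonoidAlgebra.single (Finsupp.single p.2 1) 1
            - AddMonoidAlgebra.single (Finsupp.single p.1 (-1)) t⁻¹))) :=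
  stmt7_general k m t q ht

end CCnDAHA
end
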